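/- Inverse law of exponential Riordan arrays: let g, f, f̄ be formal power series over ℚ such that the constant coefficient of g is nonzero, the constant coefficients of f and f̄ are 0, and f∘f̄ = X and f̄∘f = X (composition of formal power series). For power series G, F with F(0)=0 define T(G,F)(n,k) = (n!/k!)·(coefficient of X^n in G·F^k). Then for all natural numbers n and k, ∑_{j=0}^{n} T(g,f)(n,j) · T((g∘f̄)⁻¹, f̄)(j,k) equals 1 if n = k and 0 otherwise, where (g∘f̄)⁻¹ is the multiplicative inverse power series of g∘f̄. -/

import Mathlib

open PowerSeries Finset

/-- Substitution (composition) of formal power series: `substPS f u = u ∘ f`,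
the usual composition `∑ₙ uₙ fⁿ`, well-defined coefficient-wise when `f` has zero
constant coefficient. -/
noncomputable def substPS (f u : PowerSeries ℚ) : PowerSeries ℚ :=
  PowerSeries.mk fun n => ∑ j ∈ Finset.range (n + 1),
    (PowerSeries.coeff j u) * PowerSeries.coeff n (f ^ j)

/-- The `(n,k)` entry of the exponential Riordan array `[G, F]`. -/
noncomputable def riordanEntry (G F : PowerSeries ℚ) (n k : ℕ) : ℚ :=
  ((n.factorial : ℚ) / (k.factorial : ℚ)) * PowerSeries.coeff n (G * F ^ k)

/-!
By the multiplication rule for exponential Riordan arrays, the `(n, k)` entry of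
`[g, f] · [h, f̄]` is `(n!/k!) [Xⁿ] g · ((h · f̄ᵏ) ∘ f)`. Composition with `f` is a ring
homomorphism, so `(h · f̄ᵏ) ∘ f = (h ∘ f) · (f̄ ∘ f)ᵏ = (h ∘ f) · Xᵏ`, and for
`h = (g ∘ f̄)⁻¹` we get `g · (h ∘ f) = ((g ∘ f̄) · h) ∘ f = 1`. The entry is therefore
`(n!/k!) [Xⁿ] Xᵏ = δₙₖ`.
-/

namespace PowerSeries

theorem coeff_pow_eq_zero_of_lt {R : Type*} [CommSemiring R] {f : R⟦X⟧}
    (hf : constantCoeff f = 0) {n j : ℕ} (h : n < j) : coeff n (f ^ j) = 0 :=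
  X_pow_dvd_iff.mp (pow_dvd_pow_of_dvd (X_dvd_iff.mpr hf) j) n h

variable {R : Type*} [CommRing R]

theorem coeff_subst_eq_sum_range {f : R⟦X⟧} (hf : constantCoeff f = 0) (u : R⟦X⟧)
    {n N : ℕ} (hN : n < N) :
    coeff n (u.subst f) = ∑ j ∈ range N, coeff j u * coeff n (f ^ j) := by
  rw [coeff_subst' (HasSubst.of_constantCoeff_zero' hf)]
  refine finsum_eq_sum_of_support_subset _ fun j hj => ?_
  rw [Function.mem_support] at hj
  rw [coe_range, Set.mem_Iio]
  by_contra! hjN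
  exact hj (by rw [coeff_pow_eq_zero_of_lt hf (hN.trans_le hjN), smul_zero])

theorem constantCoeff_subst_of_constantCoeff_eq_zero {f : R⟦X⟧} (hf : constantCoeff f = 0)
    (u : R⟦X⟧) : constantCoeff (u.subst f) = constantCoeff u := by
  simpa using coeff_subst_eq_sum_range hf u zero_lt_one

theorem subst_one {f : R⟦X⟧} (hf : HasSubst f) : (1 : R⟦X⟧).subst f = 1 := by
  rw [← coe_substAlgHom hf, map_one]

theorem coeff_mul_subst {f : R⟦X⟧} (hf : constantCoeff f = 0) (g u : R⟦X⟧) (n : ℕ) :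
    coeff n (g * u.subst f) = ∑ j ∈ range (n + 1), coeff j u * coeff n (g * f ^ j) := by
  simp_rw [coeff_mul, mul_sum]
  rw [sum_comm]
  refine sum_congr rfl fun p hp => ?_
  rw [coeff_subst_eq_sum_range hf u (N := n + 1)
    (by rw [HasAntidiagonal.mem_antidiagonal] at hp; omega), mul_sum]
  exact sum_congr rfl fun j _ => by ring

end PowerSeries

theorem substPS_eq_subst {f : ℚ⟦X⟧} (hf : constantCoeff f = 0) (u : ℚ⟦X⟧) :
    substPS f u = u.subst f := by
  ext n
  rw [substPS, coeff_mk, coeff_subst_eq_sum_range hf u n.lt_succ_self]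

theorem sum_riordanEntry_mul_riordanEntry {F : ℚ⟦X⟧} (hF : constantCoeff F = 0)
    (G H K : ℚ⟦X⟧) (n k : ℕ) :
    ∑ j ∈ range (n + 1), riordanEntry G F n j * riordanEntry H K j k
      = n.factorial / k.factorial * coeff n (G * (H * K ^ k).subst F) := by
  rw [coeff_mul_subst hF, mul_sum]
  refine sum_congr rfl fun j _ => ?_
  have : (j.factorial : ℚ) ≠ 0 := mod_cast j.factorial_ne_zero
  simp only [riordanEntry]
  field_simp

theorem riordan_inverse_general (g f fbar : PowerSeries ℚ)
    (hg : PowerSeries.constantCoeff g ≠ 0)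
    (hf : PowerSeries.constantCoeff f = 0)
    (hfbar : PowerSeries.constantCoeff fbar = 0)
    (h₂ : substPS f fbar = PowerSeries.X) (n k : ℕ) :
    ∑ j ∈ Finset.range (n + 1),
        riordanEntry g f n j * riordanEntry (substPS fbar g)⁻¹ fbar j k
      = if n = k then 1 else 0 := by
  have hfS := HasSubst.of_constantCoeff_zero' hf
  rw [substPS_eq_subst hf] at h₂
  rw [substPS_eq_subst hfbar]
  set w : ℚ⟦X⟧ := g.subst fbar
  have hw : constantCoeff w ≠ 0 := by
    rwa [constantCoeff_subst_of_constantCoeff_eq_zero hfbar]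
  have hwf : w.subst f = g := by
    rw [subst_comp_subst_apply (HasSubst.of_constantCoeff_zero' hfbar) hfS, h₂, X_subst]
  have hgw : g * (w⁻¹).subst f = 1 := by
    rw [← hwf, ← subst_mul hfS, PowerSeries.mul_inv_cancel w hw, subst_one hfS]
  rw [sum_riordanEntry_mul_riordanEntry hf, subst_mul hfS, subst_pow hfS, h₂, ← mul_assoc, hgw,
    one_mul, coeff_X_pow]
  split_ifs with hnk
  · subst hnk
    have : (n.factorial : ℚ) ≠ 0 := mod_cast n.factorial_ne_zero
    field_simp
  · rw [mul_zero]

theorem riordan_inverse (g f fbar : PowerSeries ℚ)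
    (hg : PowerSeries.constantCoeff g ≠ 0)
    (hf : PowerSeries.constantCoeff f = 0)
    (hfbar : PowerSeries.constantCoeff fbar = 0)
    (h₁ : substPS fbar f = PowerSeries.X)
    (h₂ : substPS f fbar = PowerSeries.X) (n k : ℕ) :
    ∑ j ∈ Finset.range (n + 1),
        riordanEntry g f n j * riordanEntry (substPS fbar g)⁻¹ fbar j k
      = if n = k then 1 else 0 :=
  riordan_inverse_general g f fbar hg hf hfbar h₂ n k
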